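/- arXiv:math/0607505 — 2 statements merged into one kernel-verified Lean document; each statement's English description precedes it below -/
import Mathlib

section
/- There exists a finite constant L, depending only on a₁, a₂ and k₀, such that |φ − ψ| ≤ L·|ρ(φ) − ρ(ψ)| for all φ, ψ > 0. That is, the fugacity φ(ρ), viewed as the inverse of the strictly increasing density map φ ↦ ρ(φ), is a Lipschitz (and strictly increasing) function of the density. -/
noncomputable section

/-- `c(k)! = ∏_{m=1}^k c(m)`, with `c(0)! = 1`. -/
def cfact (c : ℕ → ℝ) : ℕ → ℝ
  | 0 => 1
  | k + 1 => cfact c k * c (k + 1)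

/-- The partition function `Z(φ) = ∑_{k ≥ 0} φ^k / c(k)!`. -/
def Zfun (c : ℕ → ℝ) (φ : ℝ) : ℝ := ∑' k : ℕ, φ ^ k / cfact c k

/-- The grand canonical single-site measure `μ_φ({k}) = φ^k / (Z(φ) c(k)!)`. -/
def mu (c : ℕ → ℝ) (φ : ℝ) (k : ℕ) : ℝ := φ ^ k / (Zfun c φ * cfact c k)

/-- The mean `ρ(φ)` of `μ_φ`. -/
def rho (c : ℕ → ℝ) (φ : ℝ) : ℝ := ∑' k : ℕ, (k : ℝ) * mu c φ k
/-!
Write `w_x(k) = x^k / c(k)!`, so that `Z(x) = ∑ w_x(k)`, `ρ(x) Z(x) = ∑ k w_x(k)`, and, since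
`c(k+1) w_x(k+1) = x w_x(k)` and `c(0) = 0`, also `x Z(x) = ∑ c(k) w_x(k)`. For `ψ ≤ φ` put
`D(j,k) = w_φ(j) w_ψ(k) - w_ψ(j) w_φ(k)`; then `(j - k) D(j,k) ≥ 0`, and symmetrising gives
`∑_{j,k} (f(j) - f(k)) D(j,k) = 2 Z(φ) Z(ψ) (E_φ f - E_ψ f)`. Taking `f = c` and `f = id` and using
`|c(j) - c(k)| ≤ a₁ |j - k|` pointwise yields `φ - ψ ≤ a₁ (ρ(φ) - ρ(ψ))`, so `L = a₁` works.
Condition (M) only enters through `c → ∞`, which makes all the series converge.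
-/

open Filter Finset

section Symmetrization

variable {ι : Type*} {p q f g : ι → ℝ} {P Q Fp Fq Gp Gq : ℝ}

lemma HasSum.mul_of_real {κ : Type*} {u : ι → ℝ} {v : κ → ℝ} {s t : ℝ}
    (hu : HasSum u s) (hv : HasSum v t) : HasSum (fun x : ι × κ => u x.1 * v x.2) (s * t) :=
  hu.mul hv (summable_mul_of_summable_norm hu.summable.norm hv.summable.norm)

lemma hasSum_sub_mul_cross (hp : HasSum p P) (hq : HasSum q Q)
    (hfp : HasSum (fun i => f i * p i) Fp) (hfq : HasSum (fun i => f i * q i) Fq) :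
    HasSum (fun x : ι × ι => (f x.1 - f x.2) * (p x.1 * q x.2 - q x.1 * p x.2))
      (2 * (Fp * Q - Fq * P)) := by
  have h := (((hfp.mul_of_real hq).sub (hfq.mul_of_real hp)).sub
    ((hp.mul_of_real hfq).sub (hq.mul_of_real hfp)))
  rw [show 2 * (Fp * Q - Fq * P) = Fp * Q - Fq * P - (P * Fq - Q * Fp) by ring]
  exact h.congr_fun fun x => by ring

lemma mul_sub_mul_le_of_cross_le (hp : HasSum p P) (hq : HasSum q Q)
    (hfp : HasSum (fun i => f i * p i) Fp) (hfq : HasSum (fun i => f i * q i) Fq)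
    (hgp : HasSum (fun i => g i * p i) Gp) (hgq : HasSum (fun i => g i * q i) Gq) {a : ℝ}
    (h : ∀ i j, (f i - f j) * (p i * q j - q i * p j) ≤ a * ((g i - g j) * (p i * q j - q i * p j))) :
    Fp * Q - Fq * P ≤ a * (Gp * Q - Gq * P) := by
  have := hasSum_le (fun x : ι × ι => h x.1 x.2) (hasSum_sub_mul_cross hp hq hfp hfq)
    ((hasSum_sub_mul_cross hp hq hgp hgq).mul_left a)
  linarith

end Symmetrization

section Growth

variable {c : ℕ → ℝ}

lemma abs_sub_le_mul_abs_sub_of_abs_succ_sub_le {a : ℝ} (h : ∀ k, |c (k + 1) - c k| ≤ a) :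
    ∀ j k : ℕ, |c j - c k| ≤ a * |(j : ℝ) - k| := by
  suffices ∀ j k : ℕ, j ≤ k → |c j - c k| ≤ a * |(j : ℝ) - k| by
    intro j k
    rcases le_total j k with hjk | hkj
    · exact this j k hjk
    · rw [abs_sub_comm, abs_sub_comm (j : ℝ)]; exact this k j hkj
  intro j k hjk
  calc |c j - c k| ≤ ∑ i ∈ Ico j k, |c i - c (i + 1)| := dist_le_Ico_sum_dist c hjk
    _ ≤ (Ico j k).card • a := sum_le_card_nsmul _ _ _ fun i _ => by rw [abs_sub_comm]; exact h i
    _ = a * |(j : ℝ) - k| := by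
      rw [Nat.card_Ico, nsmul_eq_mul, abs_sub_comm, abs_of_nonneg (by simpa using hjk),
        Nat.cast_sub hjk, mul_comm]

lemma tendsto_atTop_of_le_sub_add {a : ℝ} {k₀ : ℕ} (hc : ∀ k, 0 ≤ c k) (ha : 0 < a)
    (h : ∀ k, a ≤ c (k + k₀) - c k) : Tendsto c atTop atTop := by
  have hk₀ : 0 < k₀ := by
    rcases k₀.eq_zero_or_pos with rfl | hk₀
    · linarith [h 0]
    · exact hk₀
  have hstep : ∀ n r : ℕ, c r + n * a ≤ c (r + n * k₀) := by
    intro n r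
    induction n with
    | zero => simp
    | succ n ih =>
      have := h (r + n * k₀)
      rw [show r + (n + 1) * k₀ = r + n * k₀ + k₀ by ring]
      push_cast
      linarith
  refine tendsto_atTop_atTop.2 fun b => ?_
  obtain ⟨N, hN⟩ := exists_nat_ge (b / a)
  refine ⟨N * k₀, fun k hk => ?_⟩
  have hNk : (N : ℝ) ≤ (k / k₀ : ℕ) := by exact_mod_cast (Nat.le_div_iff_mul_le hk₀).2 hk
  have := hstep (k / k₀) (k % k₀)
  rw [Nat.mod_add_div'] at this
  have := hc (k % k₀)
  rw [div_le_iff₀ ha] at hN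
  nlinarith

end Growth

lemma sub_mul_pow_sub_pow_nonneg {φ ψ : ℝ} (hψ : 0 ≤ ψ) (hψφ : ψ ≤ φ) (j k : ℕ) :
    0 ≤ ((j : ℝ) - k) * (φ ^ j * ψ ^ k - ψ ^ j * φ ^ k) := by
  wlog hkj : k ≤ j generalizing j k
  · convert this k j (le_of_not_ge hkj) using 1
    ring
  obtain ⟨m, rfl⟩ := Nat.exists_eq_add_of_le hkj
  have hφ := hψ.trans hψφ
  have hsplit : φ ^ (k + m) * ψ ^ k - ψ ^ (k + m) * φ ^ k = (φ * ψ) ^ k * (φ ^ m - ψ ^ m) := by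
    ring
  rw [hsplit, Nat.cast_add, add_sub_cancel_left]
  exact mul_nonneg m.cast_nonneg
    (mul_nonneg (by positivity) (sub_nonneg.2 (pow_le_pow_left₀ hψ hψφ m)))

section Weights

variable {c : ℕ → ℝ}

def weight (c : ℕ → ℝ) (x : ℝ) (k : ℕ) : ℝ := x ^ k / cfact c k

lemma cfact_pos (hc : ∀ k, 1 ≤ k → 0 < c k) : ∀ k, 0 < cfact c k
  | 0 => one_pos
  | k + 1 => mul_pos (cfact_pos hc k) (hc (k + 1) k.succ_pos)

lemma weight_nonneg (hc : ∀ k, 1 ≤ k → 0 < c k) {x : ℝ} (hx : 0 ≤ x) (k : ℕ) :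
    0 ≤ weight c x k :=
  div_nonneg (pow_nonneg hx k) (cfact_pos hc k).le

lemma weight_succ (hc : ∀ k, 1 ≤ k → 0 < c k) (x : ℝ) (k : ℕ) :
    c (k + 1) * weight c x (k + 1) = x * weight c x k := by
  have := (hc (k + 1) k.succ_pos).ne'
  have := (cfact_pos hc k).ne'
  simp only [weight, cfact, pow_succ]
  field_simp

lemma summable_weight (hc : ∀ k, 1 ≤ k → 0 < c k) (htop : Tendsto c atTop atTop) (x : ℝ) :
    Summable (weight c x) := by
  refine summable_of_ratio_norm_eventually_le (r := 1 / 2) (by norm_num) ?_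
  filter_upwards [(tendsto_add_atTop_iff_nat 1).2 htop |>.eventually_ge_atTop (2 * |x|)]
    with k hk
  have hck := hc (k + 1) k.succ_pos
  have h := congrArg norm (weight_succ hc x k)
  rw [norm_mul, norm_mul, Real.norm_of_nonneg hck.le, Real.norm_eq_abs x] at h
  have := norm_nonneg (weight c x k)
  have := norm_nonneg (weight c x (k + 1))
  nlinarith

lemma summable_natCast_mul_weight (hc : ∀ k, 1 ≤ k → 0 < c k) (htop : Tendsto c atTop atTop)
    {x : ℝ} (hx : 0 ≤ x) : Summable fun k : ℕ => (k : ℝ) * weight c x k := by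
  refine (summable_weight hc htop (2 * x)).of_nonneg_of_le
    (fun k => mul_nonneg k.cast_nonneg (weight_nonneg hc hx k)) fun k => ?_
  have hk : (k : ℝ) ≤ 2 ^ k := by exact_mod_cast Nat.lt_two_pow_self.le
  calc (k : ℝ) * weight c x k ≤ 2 ^ k * weight c x k :=
        mul_le_mul_of_nonneg_right hk (weight_nonneg hc hx k)
    _ = weight c (2 * x) k := by simp only [weight, mul_pow, mul_div_assoc]

lemma Zfun_eq_tsum_weight (x : ℝ) : Zfun c x = ∑' k, weight c x k := rfl

lemma Zfun_pos (hc : ∀ k, 1 ≤ k → 0 < c k) (htop : Tendsto c atTop atTop) {x : ℝ} (hx : 0 ≤ x) :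
    0 < Zfun c x :=
  (summable_weight hc htop x).tsum_pos (weight_nonneg hc hx) 0 (by simp [weight, cfact])

lemma hasSum_mul_weight (h0 : c 0 = 0) (hc : ∀ k, 1 ≤ k → 0 < c k)
    (htop : Tendsto c atTop atTop) (x : ℝ) :
    HasSum (fun k => c k * weight c x k) (x * Zfun c x) := by
  rw [Zfun_eq_tsum_weight, ← hasSum_nat_add_iff' 1]
  simpa [h0, weight_succ hc] using (summable_weight hc htop x).hasSum.mul_left x

lemma rho_eq_tsum_div (x : ℝ) : rho c x = (∑' k : ℕ, (k : ℝ) * weight c x k) / Zfun c x := by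
  simp only [rho, mu, div_mul_eq_div_div_swap, ← tsum_div_const, weight, mul_div_assoc]

lemma sub_mul_cross_weight_nonneg (hc : ∀ k, 1 ≤ k → 0 < c k) {φ ψ : ℝ} (hψ : 0 ≤ ψ)
    (hψφ : ψ ≤ φ) (j k : ℕ) :
    0 ≤ ((j : ℝ) - k) * (weight c φ j * weight c ψ k - weight c ψ j * weight c φ k) := by
  have hcross : weight c φ j * weight c ψ k - weight c ψ j * weight c φ k =
      (φ ^ j * ψ ^ k - ψ ^ j * φ ^ k) / (cfact c j * cfact c k) := by
    simp only [weight]; ring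
  have := cfact_pos hc j
  have := cfact_pos hc k
  rw [hcross, ← mul_div_assoc]
  exact div_nonneg (sub_mul_pow_sub_pow_nonneg hψ hψφ j k) (by positivity)

lemma sub_le_mul_rho_sub (h0 : c 0 = 0) (hc : ∀ k, 1 ≤ k → 0 < c k)
    (htop : Tendsto c atTop atTop) {a : ℝ} (hlip : ∀ j k : ℕ, |c j - c k| ≤ a * |(j : ℝ) - k|)
    {φ ψ : ℝ} (hψ : 0 < ψ) (hψφ : ψ ≤ φ) :
    φ - ψ ≤ a * (rho c φ - rho c ψ) := by
  have hφ : 0 < φ := hψ.trans_le hψφ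
  have hZφ := Zfun_pos hc htop hφ.le
  have hZψ := Zfun_pos hc htop hψ.le
  have key := mul_sub_mul_le_of_cross_le (f := c) (g := fun k : ℕ => (k : ℝ)) (a := a)
    (summable_weight hc htop φ).hasSum (summable_weight hc htop ψ).hasSum
    (hasSum_mul_weight h0 hc htop φ) (hasSum_mul_weight h0 hc htop ψ)
    (summable_natCast_mul_weight hc htop hφ.le).hasSum
    (summable_natCast_mul_weight hc htop hψ.le).hasSum fun i j => by
      set D := weight c φ i * weight c ψ j - weight c ψ i * weight c φ j
      calc (c i - c j) * D ≤ |c i - c j| * |D| := by rw [← abs_mul]; exact le_abs_self _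
        _ ≤ a * |(i : ℝ) - j| * |D| := mul_le_mul_of_nonneg_right (hlip i j) (abs_nonneg D)
        _ = a * (((i : ℝ) - j) * D) := by
          rw [mul_assoc, ← abs_mul, abs_of_nonneg (sub_mul_cross_weight_nonneg hc hψ.le hψφ i j)]
  rw [← Zfun_eq_tsum_weight, ← Zfun_eq_tsum_weight] at key
  rw [rho_eq_tsum_div, rho_eq_tsum_div, div_sub_div _ _ hZφ.ne' hZψ.ne', mul_div_assoc',
    le_div_iff₀ (mul_pos hZφ hZψ)]
  linear_combination key

end Weights

theorem stmt9_general (a₁ a₂ : ℝ) (k₀ : ℕ) (ha₂ : 0 < a₂) :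
    ∃ L : ℝ, ∀ c : ℕ → ℝ, c 0 = 0 → (∀ k : ℕ, 1 ≤ k → 0 < c k) →
      (∀ k : ℕ, |c (k + 1) - c k| ≤ a₁) →
      (∀ k : ℕ, a₂ ≤ c (k + k₀) - c k) →
      ∀ φ ψ : ℝ, 0 < φ → 0 < ψ →
        |φ - ψ| ≤ L * |rho c φ - rho c ψ| := by
  refine ⟨a₁, fun c h0 hc hLG hM φ ψ hφ hψ => ?_⟩
  have hnonneg : ∀ k, 0 ≤ c k := fun k =>
    k.eq_zero_or_pos.elim (fun hk => hk ▸ h0.ge) fun hk => (hc k hk).le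
  have htop := tendsto_atTop_of_le_sub_add hnonneg ha₂ hM
  have hlip := abs_sub_le_mul_abs_sub_of_abs_succ_sub_le hLG
  have ha₁ : 0 ≤ a₁ := (abs_nonneg _).trans (hLG 0)
  wlog hψφ : ψ ≤ φ generalizing φ ψ
  · rw [abs_sub_comm, abs_sub_comm (rho c φ)]
    exact this ψ φ hψ hφ (le_of_not_ge hψφ)
  rw [abs_of_nonneg (sub_nonneg.2 hψφ)]
  exact (sub_le_mul_rho_sub h0 hc htop hlip hψ hψφ).trans
    (mul_le_mul_of_nonneg_left (le_abs_self _) ha₁)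

/-- There is a finite constant `L`, depending only on `a₁`, `a₂`, `k₀`,
such that `|φ − ψ| ≤ L·|ρ(φ) − ρ(ψ)|` for all `φ, ψ > 0`: the fugacity `φ(ρ)`, the inverse
of the strictly increasing density map `φ ↦ ρ(φ)`, is a Lipschitz function of the density. -/
theorem stmt9 (a₁ a₂ : ℝ) (k₀ : ℕ) (hk₀ : 1 ≤ k₀) (ha₂ : 0 < a₂) :
    ∃ L : ℝ, ∀ c : ℕ → ℝ, c 0 = 0 → (∀ k : ℕ, 1 ≤ k → 0 < c k) →
      (∀ k : ℕ, |c (k + 1) - c k| ≤ a₁) →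
      (∀ k : ℕ, a₂ ≤ c (k + k₀) - c k) →
      ∀ φ ψ : ℝ, 0 < φ → 0 < ψ →
        |φ - ψ| ≤ L * |rho c φ - rho c ψ| :=
  stmt9_general a₁ a₂ k₀ ha₂
end
end

section
/- For all φ₁, φ₂ > 0 and all bounded functions f, g : (ℕ × ℕ)^{ℤ/Nℤ} → ℝ, the integrals ∫ f·(L₂ g) dν_{φ₁,φ₂}^{⊗N} and ∫ g·(L₂ f) dν_{φ₁,φ₂}^{⊗N} are absolutely convergent and equal. That is, the product measures on (ℕ × ℕ)^{ℤ/Nℤ} with single-site marginal ν_{φ₁,φ₂} are stationary and reversible for the two-colour zero range process. -/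
noncomputable section

/-- The two-colour single-site measure
`ν_{φ₁,φ₂}({(k,m)}) = φ₁^k φ₂^m binom(k+m,k) / (c(k+m)! Z(φ₁+φ₂))`. -/
def nu2 (c : ℕ → ℝ) (φ₁ φ₂ : ℝ) (p : ℕ × ℕ) : ℝ :=
  φ₁ ^ p.1 * φ₂ ^ p.2 * ((p.1 + p.2).choose p.1 : ℝ) /
    (cfact c (p.1 + p.2) * Zfun c (φ₁ + φ₂))

/-- Colour-1 jump rate `c₁(k,m) = k·c(k+m)/(k+m)` (equal to `0` when `k = m = 0`). -/
def crate1 (c : ℕ → ℝ) (k m : ℕ) : ℝ := (k : ℝ) * c (k + m) / ((k : ℝ) + (m : ℝ))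

/-- Colour-2 jump rate `c₂(k,m) = m·c(k+m)/(k+m)` (equal to `0` when `k = m = 0`). -/
def crate2 (c : ℕ → ℝ) (k m : ℕ) : ℝ := (m : ℝ) * c (k + m) / ((k : ℝ) + (m : ℝ))

/-- Move one colour-1 particle from `x` to `y`. -/
def move1 {N : ℕ} (η : ZMod N → ℕ × ℕ) (x y : ZMod N) : ZMod N → ℕ × ℕ :=
  fun z =>
    if z = x then ((η x).1 - 1, (η x).2)
    else if z = y then ((η y).1 + 1, (η y).2)
    else η z

/-- Move one colour-2 particle from `x` to `y`. -/
def move2 {N : ℕ} (η : ZMod N → ℕ × ℕ) (x y : ZMod N) : ZMod N → ℕ × ℕ :=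
  fun z =>
    if z = x then ((η x).1, (η x).2 - 1)
    else if z = y then ((η y).1, (η y).2 + 1)
    else η z

/-- The two-colour zero range generator
`(L₂f)(η) = (1/2) ∑_{i=1,2} ∑_x ∑_{y = x±1} c_i(η(x)) [f(η_i^{x,y}) − f(η)]`. -/
def gen2 (c : ℕ → ℝ) (N : ℕ) [NeZero N] (f : (ZMod N → ℕ × ℕ) → ℝ)
    (η : ZMod N → ℕ × ℕ) : ℝ :=
  (1 / 2) * ∑ x : ZMod N,
    (crate1 c (η x).1 (η x).2 * (f (move1 η x (x + 1)) - f η) +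
     crate1 c (η x).1 (η x).2 * (f (move1 η x (x - 1)) - f η) +
     crate2 c (η x).1 (η x).2 * (f (move2 η x (x + 1)) - f η) +
     crate2 c (η x).1 (η x).2 * (f (move2 η x (x - 1)) - f η))

/-- The weight of a two-colour configuration under the product measure `ν_{φ₁,φ₂}^{⊗N}`. -/
def wt2 (c : ℕ → ℝ) (φ₁ φ₂ : ℝ) (N : ℕ) [NeZero N] (η : ZMod N → ℕ × ℕ) : ℝ :=
  ∏ x : ZMod N, nu2 c φ₁ φ₂ (η x)

section Aux

variable {c : ℕ → ℝ} {a₁ a₂ : ℝ} {k₀ : ℕ}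

lemma aux_cfact_pos (hcpos : ∀ k : ℕ, 1 ≤ k → 0 < c k) : ∀ k, 0 < cfact c k := by
  intro k
  induction k with
  | zero => norm_num [cfact]
  | succ n ih => exact mul_pos ih (hcpos (n+1) (Nat.le_add_left 1 n))

lemma aux_c_nonneg (hc0 : c 0 = 0) (hcpos : ∀ k : ℕ, 1 ≤ k → 0 < c k) :
    ∀ k, 0 ≤ c k := by
  intro k
  cases k with
  | zero => simp [hc0]
  | succ n => exact (hcpos (n+1) (Nat.le_add_left 1 n)).le

lemma aux_a₁_nonneg (hLG : ∀ k : ℕ, |c (k + 1) - c k| ≤ a₁) : 0 ≤ a₁ :=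
  le_trans (abs_nonneg _) (hLG 0)

lemma aux_c_succ_le (hLG : ∀ k : ℕ, |c (k + 1) - c k| ≤ a₁) (k : ℕ) :
    c (k + 1) ≤ c k + a₁ := by
  have := abs_le.mp (hLG k)
  linarith [this.2]

/-- eventually `c` exceeds any bound -/
lemma aux_c_large (hc0 : c 0 = 0) (hcpos : ∀ k : ℕ, 1 ≤ k → 0 < c k)
    (hk₀ : 1 ≤ k₀) (ha₂ : 0 < a₂) (hM : ∀ k : ℕ, a₂ ≤ c (k + k₀) - c k) (B : ℝ) :
    ∃ K : ℕ, ∀ n, K ≤ n → B ≤ c n := by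
  obtain ⟨j, hj⟩ := exists_nat_ge (B / a₂)
  have hstep : ∀ (i r : ℕ), (i : ℝ) * a₂ ≤ c (r + i * k₀) := by
    intro i
    induction i with
    | zero => intro r; simpa using aux_c_nonneg hc0 hcpos r
    | succ n ih =>
        intro r
        have h1 := ih r
        have h2 := hM (r + n * k₀)
        have : r + (n+1) * k₀ = (r + n * k₀) + k₀ := by ring
        rw [this]
        push_cast
        nlinarith
  refine ⟨j * k₀, fun n hn => ?_⟩
  have h1 : (j : ℝ) * a₂ ≤ c n := by
    have := hstep j (n - j * k₀)
    rwa [Nat.sub_add_cancel hn] at this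
  have hB : B ≤ (j : ℝ) * a₂ := by
    rw [div_le_iff₀ ha₂] at hj; linarith
  linarith

/-- the key single-site tail bound: `(1 + c n) φ^n / cfact n ≤ C (1/2)^n`. -/
lemma aux_geom_bound (hc0 : c 0 = 0) (hcpos : ∀ k : ℕ, 1 ≤ k → 0 < c k)
    (hLG : ∀ k : ℕ, |c (k + 1) - c k| ≤ a₁)
    (hk₀ : 1 ≤ k₀) (ha₂ : 0 < a₂) (hM : ∀ k : ℕ, a₂ ≤ c (k + k₀) - c k)
    {φ : ℝ} (hφ : 0 < φ) :
    ∃ C : ℝ, 0 ≤ C ∧ ∀ n, (1 + c n) * φ ^ n / cfact c n ≤ C * (1/2) ^ n := by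
  obtain ⟨K, hK⟩ := aux_c_large hc0 hcpos hk₀ ha₂ hM (2 * (1 + a₁) * φ)
  set v : ℕ → ℝ := fun n => (1 + c n) * φ ^ n / cfact c n with hv
  have hvnn : ∀ n, 0 ≤ v n := by
    intro n
    apply div_nonneg
    · have := aux_c_nonneg hc0 hcpos n
      positivity
    · exact (aux_cfact_pos hcpos n).le
  have ha₁ : 0 ≤ a₁ := aux_a₁_nonneg hLG
  have hstep : ∀ n, K ≤ n + 1 → v (n + 1) ≤ (1/2) * v n := by
    intro n hn
    have hc1 : 2 * (1 + a₁) * φ ≤ c (n + 1) := hK (n+1) hn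
    have hcpos1 : 0 < c (n + 1) := hcpos (n+1) (Nat.le_add_left 1 n)
    have hnum : 1 + c (n + 1) ≤ (1 + a₁) * (1 + c n) := by
      have h2 := aux_c_succ_le hLG n
      have h3 := aux_c_nonneg hc0 hcpos n
      nlinarith
    have hcf : cfact c (n + 1) = cfact c n * c (n + 1) := rfl
    have hcfp := aux_cfact_pos hcpos n
    have hcn : 0 ≤ c n := aux_c_nonneg hc0 hcpos n
    rw [hv]
    simp only [hcf, pow_succ]
    rw [div_le_iff₀ (by positivity)]
    have key : (1 + c (n+1)) * (φ ^ n * φ) ≤ ((1 + a₁) * (1 + c n)) * (φ ^ n * φ) := by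
      apply mul_le_mul_of_nonneg_right hnum (by positivity)
    calc (1 + c (n+1)) * (φ ^ n * φ) ≤ ((1 + a₁) * (1 + c n)) * (φ ^ n * φ) := key
      _ = ((1 + c n) * φ ^ n) * ((1 + a₁) * φ) := by ring
      _ ≤ ((1 + c n) * φ ^ n) * (c (n+1) / 2) := by
          apply mul_le_mul_of_nonneg_left (by linarith) (by positivity)
      _ = 1 / 2 * ((1 + c n) * φ ^ n / cfact c n) * (cfact c n * c (n + 1)) := by
          field_simp
  -- now global bound
  set M : ℝ := ∑ j ∈ Finset.range (K + 1), v j with hM'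
  have hMv : ∀ j, j ≤ K → v j ≤ M := by
    intro j hj
    exact Finset.single_le_sum (fun i _ => hvnn i) (Finset.mem_range.mpr (Nat.lt_succ_of_le hj))
  have hMnn : 0 ≤ M := le_trans (hvnn 0) (hMv 0 (Nat.zero_le K))
  refine ⟨2 ^ K * M, by positivity, ?_⟩
  have main : ∀ n, v n ≤ 2 ^ K * M * (1/2) ^ n := by
    intro n
    induction n with
    | zero =>
        simp only [pow_zero, mul_one]
        calc v 0 ≤ M := hMv 0 (Nat.zero_le K)
          _ ≤ 2 ^ K * M := by nlinarith [one_le_pow₀ (a := (2:ℝ)) one_le_two (n := K)]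
    | succ n ih =>
        by_cases h : K ≤ n + 1
        · calc v (n+1) ≤ (1/2) * v n := hstep n h
            _ ≤ (1/2) * (2 ^ K * M * (1/2) ^ n) := by linarith
            _ = 2 ^ K * M * (1/2) ^ (n+1) := by ring
        · push_neg at h
          have hj : n + 1 ≤ K := by omega
          calc v (n+1) ≤ M := hMv (n+1) hj
            _ ≤ 2 ^ K * M * (1/2) ^ (n+1) := by
                have : (1:ℝ) ≤ 2 ^ K * (1/2) ^ (n+1) := by
                  rw [show (1/2 : ℝ) = 2⁻¹ by norm_num, inv_pow]
                  rw [le_mul_inv_iff₀ (by positivity), one_mul]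
                  exact pow_le_pow_right₀ one_le_two hj
                nlinarith
  exact main

end Aux
section Aux2

variable {c : ℕ → ℝ} {a₁ a₂ : ℝ} {k₀ : ℕ}

/-- packaging of the standing hypotheses -/
structure AuxHyp (c : ℕ → ℝ) (a₁ a₂ : ℝ) (k₀ : ℕ) : Prop where
  hc0 : c 0 = 0
  hcpos : ∀ k : ℕ, 1 ≤ k → 0 < c k
  hLG : ∀ k : ℕ, |c (k + 1) - c k| ≤ a₁
  hk₀ : 1 ≤ k₀
  ha₂ : 0 < a₂
  hM : ∀ k : ℕ, a₂ ≤ c (k + k₀) - c k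

variable (H : AuxHyp c a₁ a₂ k₀)

include H

lemma aux_term_nonneg (φ : ℝ) (hφ : 0 < φ) (n : ℕ) : 0 ≤ φ ^ n / cfact c n :=
  div_nonneg (by positivity) (aux_cfact_pos H.hcpos n).le

lemma aux_summable_pow (φ : ℝ) (hφ : 0 < φ) :
    Summable (fun n : ℕ => φ ^ n / cfact c n) := by
  obtain ⟨C, hC, hbd⟩ := aux_geom_bound H.hc0 H.hcpos H.hLG H.hk₀ H.ha₂ H.hM hφ
  have hgeo : Summable (fun n : ℕ => C * (1/2) ^ n) :=
    (summable_geometric_of_lt_one (by norm_num) (by norm_num)).mul_left C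
  refine Summable.of_nonneg_of_le (aux_term_nonneg H φ hφ) (fun n => ?_) hgeo
  calc φ ^ n / cfact c n ≤ (1 + c n) * φ ^ n / cfact c n := by
        apply div_le_div_of_nonneg_right ?_ (aux_cfact_pos H.hcpos n).le
        nlinarith [aux_c_nonneg H.hc0 H.hcpos n, pow_pos hφ n]
    _ ≤ C * (1/2) ^ n := hbd n

lemma aux_Z_pos (φ : ℝ) (hφ : 0 < φ) : 1 ≤ Zfun c φ := by
  have hs := aux_summable_pow H φ hφ
  have := Summable.le_tsum hs 0 (fun j _ => aux_term_nonneg H φ hφ j)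
  simpa [Zfun, cfact] using this

end Aux2
section Aux3

variable {c : ℕ → ℝ} {a₁ a₂ : ℝ} {k₀ : ℕ} {φ₁ φ₂ : ℝ}

lemma aux_crate_add (hc0 : c 0 = 0) (k m : ℕ) :
    crate1 c k m + crate2 c k m = c (k + m) := by
  rcases Nat.eq_zero_or_pos (k + m) with h | h
  · obtain ⟨hk, hm⟩ := Nat.add_eq_zero.mp h
    subst hk; subst hm
    simp [crate1, crate2, hc0]
  · have : ((k : ℝ) + m) ≠ 0 := by
      have : (0:ℝ) < (k : ℝ) + m := by exact_mod_cast h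
      linarith
    rw [crate1, crate2, ← add_div, ← add_mul]
    field_simp

lemma aux_crate1_nonneg (hc0 : c 0 = 0) (hcpos : ∀ k : ℕ, 1 ≤ k → 0 < c k) (k m : ℕ) :
    0 ≤ crate1 c k m := by
  apply div_nonneg _ (by positivity)
  have := aux_c_nonneg hc0 hcpos (k + m)
  positivity

lemma aux_crate2_nonneg (hc0 : c 0 = 0) (hcpos : ∀ k : ℕ, 1 ≤ k → 0 < c k) (k m : ℕ) :
    0 ≤ crate2 c k m := by
  apply div_nonneg _ (by positivity)
  have := aux_c_nonneg hc0 hcpos (k + m)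
  positivity

lemma aux_crate1_le (hc0 : c 0 = 0) (hcpos : ∀ k : ℕ, 1 ≤ k → 0 < c k) (k m : ℕ) :
    crate1 c k m ≤ c (k + m) := by
  have := aux_crate2_nonneg hc0 hcpos k m
  have := aux_crate_add hc0 (c := c) k m
  linarith

lemma aux_crate2_le (hc0 : c 0 = 0) (hcpos : ∀ k : ℕ, 1 ≤ k → 0 < c k) (k m : ℕ) :
    crate2 c k m ≤ c (k + m) := by
  have := aux_crate1_nonneg hc0 hcpos k m
  have := aux_crate_add hc0 (c := c) k m
  linarith

lemma aux_crate1_ne (k m : ℕ) (h : crate1 c k m ≠ 0) : 1 ≤ k := by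
  by_contra hk
  have : k = 0 := by omega
  subst this
  simp [crate1] at h

lemma aux_crate2_ne (k m : ℕ) (h : crate2 c k m ≠ 0) : 1 ≤ m := by
  by_contra hm
  have : m = 0 := by omega
  subst this
  simp [crate2] at h

variable (H : AuxHyp c a₁ a₂ k₀) (h₁ : 0 < φ₁) (h₂ : 0 < φ₂)

include H h₁ h₂

lemma aux_nu2_nonneg (p : ℕ × ℕ) : 0 ≤ nu2 c φ₁ φ₂ p := by
  have hZ : (1:ℝ) ≤ Zfun c (φ₁ + φ₂) := aux_Z_pos H (φ₁ + φ₂) (by linarith)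
  have hcf := aux_cfact_pos H.hcpos (p.1 + p.2)
  rw [nu2]
  positivity

/-- key single-site identity, colour 1 -/
lemma aux_L1 (k m : ℕ) (hk : 1 ≤ k) :
    crate1 c k m * nu2 c φ₁ φ₂ (k, m) = φ₁ * nu2 c φ₁ φ₂ (k - 1, m) := by
  obtain ⟨a, rfl⟩ : ∃ a, k = a + 1 := ⟨k - 1, by omega⟩
  have hZ : Zfun c (φ₁ + φ₂) ≠ 0 := by
    have := aux_Z_pos H (φ₁ + φ₂) (by linarith); linarith
  have hcf := aux_cfact_pos H.hcpos (a + m)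
  have hc1 : 0 < c (a + m + 1) := H.hcpos _ (Nat.le_add_left 1 _)
  have hch : ((a + m + 1 : ℕ) : ℝ) * ((a+m).choose a : ℝ)
      = ((a + m + 1).choose (a+1) : ℝ) * ((a : ℝ) + 1) := by
    exact_mod_cast congrArg (Nat.cast (R := ℝ)) (Nat.add_one_mul_choose_eq (a + m) a)
  have hcf2 : cfact c (a + 1 + m) = cfact c (a + m) * c (a + m + 1) := by
    rw [show a + 1 + m = (a + m) + 1 by ring]
    rfl
  simp only [crate1, nu2, Nat.add_sub_cancel]
  rw [hcf2]
  have h1 : ((a:ℝ) + 1 + m) ≠ 0 := by positivity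
  rw [show a + 1 + m = a + m + 1 by ring]
  push_cast at hch ⊢
  field_simp
  linear_combination (-(φ₁ ^ (a+1))) * hch

/-- key single-site identity, colour 2 -/
lemma aux_L2 (k m : ℕ) (hm : 1 ≤ m) :
    crate2 c k m * nu2 c φ₁ φ₂ (k, m) = φ₂ * nu2 c φ₁ φ₂ (k, m - 1) := by
  obtain ⟨a, rfl⟩ : ∃ a, m = a + 1 := ⟨m - 1, by omega⟩
  have hZ : Zfun c (φ₁ + φ₂) ≠ 0 := by
    have := aux_Z_pos H (φ₁ + φ₂) (by linarith); linarith
  have hcf := aux_cfact_pos H.hcpos (k + a)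
  have hc1 : 0 < c (k + a + 1) := H.hcpos _ (Nat.le_add_left 1 _)
  have hch : ((k + a + 1 : ℕ) : ℝ) * ((k+a).choose a : ℝ)
      = ((k + a + 1).choose (a+1) : ℝ) * ((a : ℝ) + 1) := by
    exact_mod_cast congrArg (Nat.cast (R := ℝ))
      (by rw [show k + a + 1 = (a + k).succ by omega, show k + a = a + k by omega]
          exact Nat.add_one_mul_choose_eq (a + k) a)
  have hsym1 : (k + (a+1)).choose k = (k + a + 1).choose (a+1) := by
    rw [← Nat.choose_symm (show k ≤ k + (a+1) by omega)]
    congr 1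
    omega
  have hsym2 : (k + a).choose k = (k + a).choose a := by
    rw [← Nat.choose_symm (show k ≤ k + a by omega)]
    congr 1
    omega
  have hcf2 : cfact c (k + (a + 1)) = cfact c (k + a) * c (k + a + 1) := by
    rw [show k + (a + 1) = (k + a) + 1 by ring]
    rfl
  simp only [crate2, nu2, Nat.add_sub_cancel]
  rw [hcf2, hsym1, hsym2]
  simp only [show k + (a + 1) = k + a + 1 from by omega]
  push_cast at hch ⊢
  set X : ℝ := c (k + a + 1) with hX
  set F : ℝ := cfact c (k + a) with hF
  set Z' : ℝ := Zfun c (φ₁ + φ₂) with hZ'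
  set A : ℝ := (((k + a).choose a : ℕ) : ℝ) with hA
  set B : ℝ := (((k + a + 1).choose (a + 1) : ℕ) : ℝ) with hB
  field_simp
  linear_combination (-(φ₂ ^ (a+1))) * hch

end Aux3
section Aux4

variable {c : ℕ → ℝ} {a₁ a₂ : ℝ} {k₀ : ℕ} {φ₁ φ₂ : ℝ}

variable (H : AuxHyp c a₁ a₂ k₀) (h₁ : 0 < φ₁) (h₂ : 0 < φ₂)

include H h₁ h₂

/-- the binomial bound `φ₁^k φ₂^m C(k+m,k) ≤ (φ₁+φ₂)^{k+m}` -/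
lemma aux_binom_le (k m : ℕ) :
    φ₁ ^ k * φ₂ ^ m * ((k + m).choose k : ℝ) ≤ (φ₁ + φ₂) ^ (k + m) := by
  rw [add_pow]
  have hk : k ∈ Finset.range (k + m + 1) := Finset.mem_range.mpr (by omega)
  have := Finset.single_le_sum
    (f := fun i => φ₁ ^ i * φ₂ ^ (k + m - i) * ((k + m).choose i : ℝ))
    (fun i _ => by positivity) hk
  simpa [Nat.add_sub_cancel_left] using this

/-- summability of the weighted single-site measure -/
lemma aux_summable_weighted :
    Summable (fun p : ℕ × ℕ => (1 + c (p.1 + p.2)) * nu2 c φ₁ φ₂ p) := by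
  obtain ⟨C, hC, hbd⟩ := aux_geom_bound H.hc0 H.hcpos H.hLG H.hk₀ H.ha₂ H.hM
    (φ := φ₁ + φ₂) (by linarith)
  have hZ : (1:ℝ) ≤ Zfun c (φ₁ + φ₂) := aux_Z_pos H (φ₁ + φ₂) (by linarith)
  have hmaj : Summable (fun p : ℕ × ℕ => C * ((1/2 : ℝ) ^ p.1 * (1/2 : ℝ) ^ p.2)) := by
    apply Summable.mul_left
    exact (summable_geometric_of_lt_one (by norm_num) (by norm_num)).mul_of_nonneg
      (summable_geometric_of_lt_one (by norm_num) (by norm_num))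
      (fun n => by positivity) (fun n => by positivity)
  refine Summable.of_nonneg_of_le (fun p => ?_) (fun p => ?_) hmaj
  · have h1 := aux_nu2_nonneg H h₁ h₂ p
    have h2 := aux_c_nonneg H.hc0 H.hcpos (p.1 + p.2)
    positivity
  · obtain ⟨k, m⟩ := p
    have hcf := aux_cfact_pos H.hcpos (k + m)
    have h2 := aux_c_nonneg H.hc0 H.hcpos (k + m)
    calc (1 + c (k + m)) * nu2 c φ₁ φ₂ (k, m)
        ≤ (1 + c (k + m)) * ((φ₁ + φ₂) ^ (k + m) / cfact c (k + m)) := by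
          apply mul_le_mul_of_nonneg_left _ (by linarith)
          rw [nu2]
          calc φ₁ ^ k * φ₂ ^ m * (((k+m).choose k : ℕ) : ℝ) /
                (cfact c (k + m) * Zfun c (φ₁ + φ₂))
              ≤ φ₁ ^ k * φ₂ ^ m * (((k+m).choose k : ℕ) : ℝ) / (cfact c (k + m) * 1) := by
                apply div_le_div_of_nonneg_left (by positivity) (by positivity)
                nlinarith
            _ ≤ (φ₁ + φ₂) ^ (k + m) / cfact c (k + m) := by
                rw [mul_one]
                apply div_le_div_of_nonneg_right (aux_binom_le H h₁ h₂ k m) hcf.le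
        _ = (1 + c (k + m)) * (φ₁ + φ₂) ^ (k + m) / cfact c (k + m) := by ring
        _ ≤ C * (1/2) ^ (k + m) := hbd (k + m)
        _ = C * ((1/2) ^ k * (1/2) ^ m) := by rw [pow_add]

lemma aux_summable_nu2 : Summable (nu2 c φ₁ φ₂) := by
  refine Summable.of_nonneg_of_le (fun p => aux_nu2_nonneg H h₁ h₂ p) (fun p => ?_)
    (aux_summable_weighted H h₁ h₂)
  have h1 := aux_nu2_nonneg H h₁ h₂ p
  have h2 := aux_c_nonneg H.hc0 H.hcpos (p.1 + p.2)
  nlinarith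

lemma aux_summable_cnu2 :
    Summable (fun p : ℕ × ℕ => (1 + c (p.1 + p.2)) * nu2 c φ₁ φ₂ p) :=
  aux_summable_weighted H h₁ h₂

end Aux4

section Aux5

/-- summability of products over `Fin n → α` -/
lemma aux_summable_pi_fin {α : Type*} :
    ∀ (n : ℕ) (w : Fin n → α → ℝ), (∀ i x, 0 ≤ w i x) → (∀ i, Summable (w i)) →
      Summable (fun ξ : Fin n → α => ∏ i, w i (ξ i)) := by
  intro n
  induction n with
  | zero =>
      intro w _ _
      haveI : Subsingleton (Fin 0 → α) := ⟨fun f g => funext fun i => i.elim0⟩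
      haveI : Finite (Fin 0 → α) := Finite.of_subsingleton
      exact Summable.of_finite
  | succ n ih =>
      intro w hpos hsum
      have hw0 : Summable (w 0) := hsum 0
      have hrest : Summable (fun ξ : Fin n → α => ∏ i : Fin n, w i.succ (ξ i)) :=
        ih (fun i => w i.succ) (fun i x => hpos i.succ x) (fun i => hsum i.succ)
      have h0nn : 0 ≤ w 0 := fun x => hpos 0 x
      have hrnn : (0 : (Fin n → α) → ℝ) ≤ fun ξ => ∏ i : Fin n, w i.succ (ξ i) :=
        fun ξ => Finset.prod_nonneg (fun i _ => hpos i.succ (ξ i))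
      have hmul := Summable.mul_of_nonneg hw0 hrest h0nn hrnn
      have key : ∀ p : α × (Fin n → α),
          (∏ i : Fin (n+1), w i ((Fin.cons p.1 p.2 : Fin (n+1) → α) i)) = w 0 p.1 * ∏ i : Fin n, w i.succ (p.2 i) := by
        intro p
        rw [Fin.prod_univ_succ]
        simp
      refine (Equiv.summable_iff (Fin.consEquiv (fun _ => α))
        (f := fun ξ : Fin (n+1) → α => ∏ i, w i (ξ i))).mp (hmul.congr (fun p => ?_))
      exact (key p).symm

/-- summability of products over a finite index type -/
lemma aux_summable_pi {ι α : Type*} [Fintype ι] (w : ι → α → ℝ)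
    (hpos : ∀ i x, 0 ≤ w i x) (hsum : ∀ i, Summable (w i)) :
    Summable (fun ξ : ι → α => ∏ i, w i (ξ i)) := by
  classical
  set n := Fintype.card ι with hn
  set e : ι ≃ Fin n := Fintype.equivFin ι with he
  have base := aux_summable_pi_fin n (fun j => w (e.symm j))
    (fun j x => hpos _ x) (fun j => hsum _)
  set E : (Fin n → α) ≃ (ι → α) := Equiv.arrowCongr e.symm (Equiv.refl α) with hE
  rw [← Equiv.summable_iff E]
  refine base.congr (fun ξ => ?_)
  show (∏ j : Fin n, w (e.symm j) (ξ j)) = ∏ i : ι, w i (E ξ i)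
  rw [← Equiv.prod_comp e.symm (fun i => w i (E ξ i))]
  apply Finset.prod_congr rfl
  intro j _
  congr 1
  simp [hE, Equiv.arrowCongr]

end Aux5
section Aux6

variable {c : ℕ → ℝ} {a₁ a₂ : ℝ} {k₀ : ℕ} {φ₁ φ₂ : ℝ} {N : ℕ} [NeZero N]

lemma aux_move1_x (η : ZMod N → ℕ × ℕ) (x y : ZMod N) :
    move1 η x y x = ((η x).1 - 1, (η x).2) := by simp [move1]

lemma aux_move1_y (η : ZMod N → ℕ × ℕ) (x y : ZMod N) (hxy : y ≠ x) :
    move1 η x y y = ((η y).1 + 1, (η y).2) := by simp [move1, hxy]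

lemma aux_move1_z (η : ZMod N → ℕ × ℕ) (x y z : ZMod N) (hx : z ≠ x) (hy : z ≠ y) :
    move1 η x y z = η z := by simp [move1, hx, hy]

lemma aux_move2_x (η : ZMod N → ℕ × ℕ) (x y : ZMod N) :
    move2 η x y x = ((η x).1, (η x).2 - 1) := by simp [move2]

lemma aux_move2_y (η : ZMod N → ℕ × ℕ) (x y : ZMod N) (hxy : y ≠ x) :
    move2 η x y y = ((η y).1, (η y).2 + 1) := by simp [move2, hxy]

lemma aux_move2_z (η : ZMod N → ℕ × ℕ) (x y z : ZMod N) (hx : z ≠ x) (hy : z ≠ y) :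
    move2 η x y z = η z := by simp [move2, hx, hy]

lemma aux_move1_move1 (η : ZMod N → ℕ × ℕ) (x y : ZMod N) (hxy : x ≠ y)
    (h : 1 ≤ (η x).1) : move1 (move1 η x y) y x = η := by
  funext z
  rcases eq_or_ne z x with rfl | hzx
  · rw [aux_move1_y _ _ _ hxy, aux_move1_x]
    have : (η z).1 - 1 + 1 = (η z).1 := by omega
    simp [this]
  · rcases eq_or_ne z y with rfl | hzy
    · rw [aux_move1_x, aux_move1_y _ _ _ (Ne.symm hxy)]
      simp
    · rw [aux_move1_z _ _ _ _ hzy hzx, aux_move1_z _ _ _ _ hzx hzy]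

lemma aux_move2_move2 (η : ZMod N → ℕ × ℕ) (x y : ZMod N) (hxy : x ≠ y)
    (h : 1 ≤ (η x).2) : move2 (move2 η x y) y x = η := by
  funext z
  rcases eq_or_ne z x with rfl | hzx
  · rw [aux_move2_y _ _ _ hxy, aux_move2_x]
    have : (η z).2 - 1 + 1 = (η z).2 := by omega
    simp [this]
  · rcases eq_or_ne z y with rfl | hzy
    · rw [aux_move2_x, aux_move2_y _ _ _ (Ne.symm hxy)]
      simp
    · rw [aux_move2_z _ _ _ _ hzy hzx, aux_move2_z _ _ _ _ hzx hzy]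

lemma aux_wt2_split (x y : ZMod N) (hxy : x ≠ y) (η : ZMod N → ℕ × ℕ) :
    wt2 c φ₁ φ₂ N η = nu2 c φ₁ φ₂ (η x) * nu2 c φ₁ φ₂ (η y) *
      ∏ z ∈ (Finset.univ.erase x).erase y, nu2 c φ₁ φ₂ (η z) := by
  rw [wt2, ← Finset.mul_prod_erase Finset.univ _ (Finset.mem_univ x),
    ← Finset.mul_prod_erase (Finset.univ.erase x) _
      (Finset.mem_erase.mpr ⟨Ne.symm hxy, Finset.mem_univ y⟩), mul_assoc]

variable (H : AuxHyp c a₁ a₂ k₀) (h₁ : 0 < φ₁) (h₂ : 0 < φ₂)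

include H h₁ h₂

lemma aux_wt2_nonneg (η : ZMod N → ℕ × ℕ) : 0 ≤ wt2 c φ₁ φ₂ N η :=
  Finset.prod_nonneg (fun z _ => aux_nu2_nonneg H h₁ h₂ (η z))

/-- detailed balance, colour 1 -/
lemma aux_db1 (x y : ZMod N) (hxy : x ≠ y) (η : ZMod N → ℕ × ℕ) (h : 1 ≤ (η x).1) :
    crate1 c (η x).1 (η x).2 * wt2 c φ₁ φ₂ N η =
      crate1 c ((η y).1 + 1) (η y).2 * wt2 c φ₁ φ₂ N (move1 η x y) := by
  rw [aux_wt2_split x y hxy η, aux_wt2_split x y hxy (move1 η x y)]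
  rw [aux_move1_x, aux_move1_y _ _ _ (Ne.symm hxy)]
  have hR : ∏ z ∈ (Finset.univ.erase x).erase y, nu2 c φ₁ φ₂ (move1 η x y z)
      = ∏ z ∈ (Finset.univ.erase x).erase y, nu2 c φ₁ φ₂ (η z) := by
    apply Finset.prod_congr rfl
    intro z hz
    have hzy : z ≠ y := (Finset.mem_erase.mp hz).1
    have hzx : z ≠ x := (Finset.mem_erase.mp (Finset.mem_erase.mp hz).2).1
    rw [aux_move1_z _ _ _ _ hzx hzy]
  rw [hR]
  have e1 : crate1 c (η x).1 (η x).2 * nu2 c φ₁ φ₂ ((η x).1, (η x).2)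
      = φ₁ * nu2 c φ₁ φ₂ ((η x).1 - 1, (η x).2) := aux_L1 H h₁ h₂ _ _ h
  have e2 : crate1 c ((η y).1 + 1) (η y).2 * nu2 c φ₁ φ₂ ((η y).1 + 1, (η y).2)
      = φ₁ * nu2 c φ₁ φ₂ ((η y).1 + 1 - 1, (η y).2) :=
    aux_L1 H h₁ h₂ _ _ (by omega)
  simp only [Nat.add_sub_cancel] at e2
  have hη : ∀ z, ((η z).1, (η z).2) = η z := fun z => rfl
  rw [hη] at e1
  rw [hη] at e2
  linear_combination (nu2 c φ₁ φ₂ (η y) * ∏ z ∈ (Finset.univ.erase x).erase y, nu2 c φ₁ φ₂ (η z)) * e1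
    - (nu2 c φ₁ φ₂ ((η x).1 - 1, (η x).2) * ∏ z ∈ (Finset.univ.erase x).erase y, nu2 c φ₁ φ₂ (η z)) * e2

/-- detailed balance, colour 2 -/
lemma aux_db2 (x y : ZMod N) (hxy : x ≠ y) (η : ZMod N → ℕ × ℕ) (h : 1 ≤ (η x).2) :
    crate2 c (η x).1 (η x).2 * wt2 c φ₁ φ₂ N η =
      crate2 c (η y).1 ((η y).2 + 1) * wt2 c φ₁ φ₂ N (move2 η x y) := by
  rw [aux_wt2_split x y hxy η, aux_wt2_split x y hxy (move2 η x y)]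
  rw [aux_move2_x, aux_move2_y _ _ _ (Ne.symm hxy)]
  have hR : ∏ z ∈ (Finset.univ.erase x).erase y, nu2 c φ₁ φ₂ (move2 η x y z)
      = ∏ z ∈ (Finset.univ.erase x).erase y, nu2 c φ₁ φ₂ (η z) := by
    apply Finset.prod_congr rfl
    intro z hz
    have hzy : z ≠ y := (Finset.mem_erase.mp hz).1
    have hzx : z ≠ x := (Finset.mem_erase.mp (Finset.mem_erase.mp hz).2).1
    rw [aux_move2_z _ _ _ _ hzx hzy]
  rw [hR]
  have e1 : crate2 c (η x).1 (η x).2 * nu2 c φ₁ φ₂ ((η x).1, (η x).2)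
      = φ₂ * nu2 c φ₁ φ₂ ((η x).1, (η x).2 - 1) := aux_L2 H h₁ h₂ _ _ h
  have e2 : crate2 c (η y).1 ((η y).2 + 1) * nu2 c φ₁ φ₂ ((η y).1, (η y).2 + 1)
      = φ₂ * nu2 c φ₁ φ₂ ((η y).1, (η y).2 + 1 - 1) :=
    aux_L2 H h₁ h₂ _ _ (by omega)
  simp only [Nat.add_sub_cancel] at e2
  have hη : ∀ z, ((η z).1, (η z).2) = η z := fun z => rfl
  rw [hη] at e1
  rw [hη] at e2
  linear_combination (nu2 c φ₁ φ₂ (η y) * ∏ z ∈ (Finset.univ.erase x).erase y, nu2 c φ₁ φ₂ (η z)) * e1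
    - (nu2 c φ₁ φ₂ ((η x).1, (η x).2 - 1) * ∏ z ∈ (Finset.univ.erase x).erase y, nu2 c φ₁ φ₂ (η z)) * e2

/-- the site-weighted majorant is summable -/
lemma aux_summable_maj (x : ZMod N) :
    Summable (fun η : ZMod N → ℕ × ℕ =>
      (1 + c ((η x).1 + (η x).2)) * wt2 c φ₁ φ₂ N η) := by
  classical
  set u : ℕ × ℕ → ℝ := fun p => (1 + c (p.1 + p.2)) * nu2 c φ₁ φ₂ p with hu
  set w : ZMod N → ℕ × ℕ → ℝ := fun z => if z = x then u else nu2 c φ₁ φ₂ with hw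
  have hpos : ∀ z p, 0 ≤ w z p := by
    intro z p
    rw [hw]
    by_cases h : z = x
    · simp only [if_pos h, hu]
      have := aux_nu2_nonneg H h₁ h₂ p
      have := aux_c_nonneg H.hc0 H.hcpos (p.1 + p.2)
      positivity
    · simp only [if_neg h]
      exact aux_nu2_nonneg H h₁ h₂ p
  have hsum : ∀ z, Summable (w z) := by
    intro z
    rw [hw]
    by_cases h : z = x
    · simp only [if_pos h]
      exact aux_summable_weighted H h₁ h₂
    · simp only [if_neg h]
      exact aux_summable_nu2 H h₁ h₂
  have base := aux_summable_pi w hpos hsum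
  refine base.congr (fun η => ?_)
  rw [← Finset.mul_prod_erase Finset.univ (fun z => w z (η z)) (Finset.mem_univ x)]
  have h1 : w x (η x) = u (η x) := by rw [hw]; simp
  have h2 : ∏ z ∈ Finset.univ.erase x, w z (η z)
      = ∏ z ∈ Finset.univ.erase x, nu2 c φ₁ φ₂ (η z) := by
    apply Finset.prod_congr rfl
    intro z hz
    have : z ≠ x := (Finset.mem_erase.mp hz).1
    rw [hw]; simp [this]
  rw [h1, h2, hu]
  rw [wt2, ← Finset.mul_prod_erase Finset.univ _ (Finset.mem_univ x)]
  ring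

end Aux6
section Aux7

variable {c : ℕ → ℝ} {a₁ a₂ : ℝ} {k₀ : ℕ} {φ₁ φ₂ : ℝ} {N : ℕ} [NeZero N]

/-- colour-1 transport piece -/
def pc1 (c : ℕ → ℝ) (φ₁ φ₂ : ℝ) (N : ℕ) [NeZero N] (f g : (ZMod N → ℕ × ℕ) → ℝ)
    (x y : ZMod N) (η : ZMod N → ℕ × ℕ) : ℝ :=
  f η * (crate1 c (η x).1 (η x).2 * g (move1 η x y)) * wt2 c φ₁ φ₂ N η

/-- colour-2 transport piece -/
def pc2 (c : ℕ → ℝ) (φ₁ φ₂ : ℝ) (N : ℕ) [NeZero N] (f g : (ZMod N → ℕ × ℕ) → ℝ)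
    (x y : ZMod N) (η : ZMod N → ℕ × ℕ) : ℝ :=
  f η * (crate2 c (η x).1 (η x).2 * g (move2 η x y)) * wt2 c φ₁ φ₂ N η

/-- diagonal piece -/
def qc (c : ℕ → ℝ) (φ₁ φ₂ : ℝ) (N : ℕ) [NeZero N] (f g : (ZMod N → ℕ × ℕ) → ℝ)
    (x : ZMod N) (η : ZMod N → ℕ × ℕ) : ℝ :=
  f η * ((crate1 c (η x).1 (η x).2 + crate2 c (η x).1 (η x).2) * g η) * wt2 c φ₁ φ₂ N η

variable (H : AuxHyp c a₁ a₂ k₀) (h₁ : 0 < φ₁) (h₂ : 0 < φ₂)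

include H h₁ h₂

lemma aux_summable_of_bound (x : ZMod N) (F : (ZMod N → ℕ × ℕ) → ℝ) (B : ℝ)
    (hB : ∀ η, |F η| ≤ B * ((1 + c ((η x).1 + (η x).2)) * wt2 c φ₁ φ₂ N η)) :
    Summable F := by
  rw [← summable_abs_iff]
  exact Summable.of_nonneg_of_le (fun η => abs_nonneg _) hB
    ((aux_summable_maj H h₁ h₂ x).mul_left B)

variable (f g : (ZMod N → ℕ × ℕ) → ℝ) (Mf Mg : ℝ)
  (hf : ∀ η, |f η| ≤ Mf) (hg : ∀ η, |g η| ≤ Mg)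

include hf hg

lemma aux_summable_pc1 (x y : ZMod N) : Summable (pc1 c φ₁ φ₂ N f g x y) := by
  apply aux_summable_of_bound H h₁ h₂ x _ (Mf * Mg)
  intro η
  have hMf : 0 ≤ Mf := le_trans (abs_nonneg _) (hf η)
  have hMg : 0 ≤ Mg := le_trans (abs_nonneg _) (hg η)
  have hW := aux_wt2_nonneg H h₁ h₂ η
  have hcr : 0 ≤ crate1 c (η x).1 (η x).2 := aux_crate1_nonneg H.hc0 H.hcpos _ _
  have hcrle : crate1 c (η x).1 (η x).2 ≤ c ((η x).1 + (η x).2) :=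
    aux_crate1_le H.hc0 H.hcpos _ _
  have hc' := aux_c_nonneg H.hc0 H.hcpos ((η x).1 + (η x).2)
  rw [pc1, abs_mul, abs_mul, abs_mul, abs_of_nonneg hcr, abs_of_nonneg hW]
  calc |f η| * (crate1 c (η x).1 (η x).2 * |g (move1 η x y)|) * wt2 c φ₁ φ₂ N η
      ≤ Mf * (c ((η x).1 + (η x).2) * Mg) * wt2 c φ₁ φ₂ N η := by
        apply mul_le_mul_of_nonneg_right _ hW
        apply mul_le_mul (hf η) _ (by positivity) hMf
        exact mul_le_mul hcrle (hg _) (abs_nonneg _) hc'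
    _ ≤ Mf * Mg * ((1 + c ((η x).1 + (η x).2)) * wt2 c φ₁ φ₂ N η) := by
        nlinarith [mul_nonneg hMf hMg, mul_nonneg (mul_nonneg hMf hMg) hW]

lemma aux_summable_pc2 (x y : ZMod N) : Summable (pc2 c φ₁ φ₂ N f g x y) := by
  apply aux_summable_of_bound H h₁ h₂ x _ (Mf * Mg)
  intro η
  have hMf : 0 ≤ Mf := le_trans (abs_nonneg _) (hf η)
  have hMg : 0 ≤ Mg := le_trans (abs_nonneg _) (hg η)
  have hW := aux_wt2_nonneg H h₁ h₂ η
  have hcr : 0 ≤ crate2 c (η x).1 (η x).2 := aux_crate2_nonneg H.hc0 H.hcpos _ _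
  have hcrle : crate2 c (η x).1 (η x).2 ≤ c ((η x).1 + (η x).2) :=
    aux_crate2_le H.hc0 H.hcpos _ _
  have hc' := aux_c_nonneg H.hc0 H.hcpos ((η x).1 + (η x).2)
  rw [pc2, abs_mul, abs_mul, abs_mul, abs_of_nonneg hcr, abs_of_nonneg hW]
  calc |f η| * (crate2 c (η x).1 (η x).2 * |g (move2 η x y)|) * wt2 c φ₁ φ₂ N η
      ≤ Mf * (c ((η x).1 + (η x).2) * Mg) * wt2 c φ₁ φ₂ N η := by
        apply mul_le_mul_of_nonneg_right _ hW
        apply mul_le_mul (hf η) _ (by positivity) hMf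
        exact mul_le_mul hcrle (hg _) (abs_nonneg _) hc'
    _ ≤ Mf * Mg * ((1 + c ((η x).1 + (η x).2)) * wt2 c φ₁ φ₂ N η) := by
        nlinarith [mul_nonneg hMf hMg, mul_nonneg (mul_nonneg hMf hMg) hW]

lemma aux_summable_qc (x : ZMod N) : Summable (qc c φ₁ φ₂ N f g x) := by
  apply aux_summable_of_bound H h₁ h₂ x _ (Mf * Mg)
  intro η
  have hMf : 0 ≤ Mf := le_trans (abs_nonneg _) (hf η)
  have hMg : 0 ≤ Mg := le_trans (abs_nonneg _) (hg η)
  have hW := aux_wt2_nonneg H h₁ h₂ η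
  have hcr1 : 0 ≤ crate1 c (η x).1 (η x).2 := aux_crate1_nonneg H.hc0 H.hcpos _ _
  have hcr2 : 0 ≤ crate2 c (η x).1 (η x).2 := aux_crate2_nonneg H.hc0 H.hcpos _ _
  have hsum : crate1 c (η x).1 (η x).2 + crate2 c (η x).1 (η x).2 = c ((η x).1 + (η x).2) :=
    aux_crate_add H.hc0 _ _
  have hc' := aux_c_nonneg H.hc0 H.hcpos ((η x).1 + (η x).2)
  rw [qc, abs_mul, abs_mul, abs_mul, abs_of_nonneg (by linarith : (0:ℝ) ≤ crate1 c (η x).1 (η x).2 + crate2 c (η x).1 (η x).2), abs_of_nonneg hW]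
  rw [hsum]
  calc |f η| * (c ((η x).1 + (η x).2) * |g η|) * wt2 c φ₁ φ₂ N η
      ≤ Mf * (c ((η x).1 + (η x).2) * Mg) * wt2 c φ₁ φ₂ N η := by
        apply mul_le_mul_of_nonneg_right _ hW
        apply mul_le_mul (hf η) _ (by positivity) hMf
        exact mul_le_mul le_rfl (hg _) (abs_nonneg _) hc'
    _ ≤ Mf * Mg * ((1 + c ((η x).1 + (η x).2)) * wt2 c φ₁ φ₂ N η) := by
        nlinarith [mul_nonneg hMf hMg, mul_nonneg (mul_nonneg hMf hMg) hW]

omit hf hg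

/-- the reversibility swap, colour 1 -/
lemma aux_swap1 (x y : ZMod N) (hxy : x ≠ y) :
    ∑' η, pc1 c φ₁ φ₂ N f g x y η = ∑' η, pc1 c φ₁ φ₂ N g f y x η := by
  set F := pc1 c φ₁ φ₂ N f g x y with hF
  set G := pc1 c φ₁ φ₂ N g f y x with hG
  have key : ∀ η, 1 ≤ (η x).1 → F η = G (move1 η x y) := by
    intro η hη
    have hback : move1 (move1 η x y) y x = η := aux_move1_move1 η x y hxy hη
    have hζy : (move1 η x y) y = ((η y).1 + 1, (η y).2) := aux_move1_y η x y (Ne.symm hxy)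
    have hdb := aux_db1 H h₁ h₂ x y hxy η hη
    rw [hF, hG, pc1, pc1, hback, hζy]
    linear_combination (f η * g (move1 η x y)) * hdb
  have hGsupp : ∀ ζ : (ZMod N → ℕ × ℕ), G ζ ≠ 0 → 1 ≤ (ζ y).1 := by
    intro ζ hζ
    apply aux_crate1_ne (c := c) (ζ y).1 (ζ y).2
    intro h0
    apply hζ
    rw [hG, pc1, h0]
    ring
  apply tsum_eq_tsum_of_ne_zero_bij (fun ζ => move1 ζ.1 y x)
  · intro ζ ζ' hzz
    have h1 : 1 ≤ (ζ.1 y).1 := hGsupp ζ.1 ζ.2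
    have h1' : 1 ≤ (ζ'.1 y).1 := hGsupp ζ'.1 ζ'.2
    have e1 : move1 (move1 ζ.1 y x) x y = ζ.1 := aux_move1_move1 ζ.1 y x (Ne.symm hxy) h1
    have e2 : move1 (move1 ζ'.1 y x) x y = ζ'.1 := aux_move1_move1 ζ'.1 y x (Ne.symm hxy) h1'
    ext1
    rw [← e1, ← e2]
    simp only at hzz
    rw [hzz]
  · intro η hη
    have hη1 : 1 ≤ (η x).1 := by
      apply aux_crate1_ne (c := c) (η x).1 (η x).2
      intro h0
      apply hη
      rw [hF, pc1, h0]
      ring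
    have hke := key η hη1
    have hmem : move1 η x y ∈ Function.support G := by
      rw [Function.mem_support, ← hke]
      exact hη
    refine ⟨⟨move1 η x y, hmem⟩, ?_⟩
    exact aux_move1_move1 η x y hxy hη1
  · intro ζ
    have h1 : 1 ≤ (ζ.1 y).1 := hGsupp ζ.1 ζ.2
    have hηx : 1 ≤ ((move1 ζ.1 y x) x).1 := by
      rw [aux_move1_y ζ.1 y x hxy]
      exact Nat.le_add_left 1 _
    have hforward : move1 (move1 ζ.1 y x) x y = ζ.1 := aux_move1_move1 ζ.1 y x (Ne.symm hxy) h1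
    rw [key _ hηx, hforward]

/-- the reversibility swap, colour 2 -/
lemma aux_swap2 (x y : ZMod N) (hxy : x ≠ y) :
    ∑' η, pc2 c φ₁ φ₂ N f g x y η = ∑' η, pc2 c φ₁ φ₂ N g f y x η := by
  set F := pc2 c φ₁ φ₂ N f g x y with hF
  set G := pc2 c φ₁ φ₂ N g f y x with hG
  have key : ∀ η, 1 ≤ (η x).2 → F η = G (move2 η x y) := by
    intro η hη
    have hback : move2 (move2 η x y) y x = η := aux_move2_move2 η x y hxy hη
    have hζy : (move2 η x y) y = ((η y).1, (η y).2 + 1) := aux_move2_y η x y (Ne.symm hxy)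
    have hdb := aux_db2 H h₁ h₂ x y hxy η hη
    rw [hF, hG, pc2, pc2, hback, hζy]
    linear_combination (f η * g (move2 η x y)) * hdb
  have hGsupp : ∀ ζ : (ZMod N → ℕ × ℕ), G ζ ≠ 0 → 1 ≤ (ζ y).2 := by
    intro ζ hζ
    apply aux_crate2_ne (c := c) (ζ y).1 (ζ y).2
    intro h0
    apply hζ
    rw [hG, pc2, h0]
    ring
  apply tsum_eq_tsum_of_ne_zero_bij (fun ζ => move2 ζ.1 y x)
  · intro ζ ζ' hzz
    have h1 : 1 ≤ (ζ.1 y).2 := hGsupp ζ.1 ζ.2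
    have h1' : 1 ≤ (ζ'.1 y).2 := hGsupp ζ'.1 ζ'.2
    have e1 : move2 (move2 ζ.1 y x) x y = ζ.1 := aux_move2_move2 ζ.1 y x (Ne.symm hxy) h1
    have e2 : move2 (move2 ζ'.1 y x) x y = ζ'.1 := aux_move2_move2 ζ'.1 y x (Ne.symm hxy) h1'
    ext1
    rw [← e1, ← e2]
    simp only at hzz
    rw [hzz]
  · intro η hη
    have hη1 : 1 ≤ (η x).2 := by
      apply aux_crate2_ne (c := c) (η x).1 (η x).2
      intro h0
      apply hη
      rw [hF, pc2, h0]
      ring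
    have hke := key η hη1
    have hmem : move2 η x y ∈ Function.support G := by
      rw [Function.mem_support, ← hke]
      exact hη
    refine ⟨⟨move2 η x y, hmem⟩, ?_⟩
    exact aux_move2_move2 η x y hxy hη1
  · intro ζ
    have h1 : 1 ≤ (ζ.1 y).2 := hGsupp ζ.1 ζ.2
    have hηx : 1 ≤ ((move2 ζ.1 y x) x).2 := by
      rw [aux_move2_y ζ.1 y x hxy]
      exact Nat.le_add_left 1 _
    have hforward : move2 (move2 ζ.1 y x) x y = ζ.1 := aux_move2_move2 ζ.1 y x (Ne.symm hxy) h1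
    rw [key _ hηx, hforward]

end Aux7

/-- For all `φ₁, φ₂ > 0` and all bounded `f, g`, the integrals
`∫ f·(L₂g) dν^{⊗N}` and `∫ g·(L₂f) dν^{⊗N}` are absolutely convergent and equal: the
product measures with single-site marginal `ν_{φ₁,φ₂}` are stationary and reversible
for the two-colour zero range process. -/
theorem stmt18 (c : ℕ → ℝ) (a₁ a₂ : ℝ) (k₀ : ℕ)
    (hc0 : c 0 = 0) (hcpos : ∀ k : ℕ, 1 ≤ k → 0 < c k)
    (hLG : ∀ k : ℕ, |c (k + 1) - c k| ≤ a₁)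
    (hk₀ : 1 ≤ k₀) (ha₂ : 0 < a₂)
    (hM : ∀ k : ℕ, a₂ ≤ c (k + k₀) - c k)
    (N : ℕ) [NeZero N] (hN : 2 ≤ N)
    (φ₁ φ₂ : ℝ) (h₁ : 0 < φ₁) (h₂ : 0 < φ₂)
    (f g : (ZMod N → ℕ × ℕ) → ℝ)
    (Mf : ℝ) (hf : ∀ η, |f η| ≤ Mf) (Mg : ℝ) (hg : ∀ η, |g η| ≤ Mg) :
    Summable (fun η : ZMod N → ℕ × ℕ => f η * gen2 c N g η * wt2 c φ₁ φ₂ N η) ∧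
    Summable (fun η : ZMod N → ℕ × ℕ => g η * gen2 c N f η * wt2 c φ₁ φ₂ N η) ∧
    (∑' η : ZMod N → ℕ × ℕ, f η * gen2 c N g η * wt2 c φ₁ φ₂ N η) =
      (∑' η : ZMod N → ℕ × ℕ, g η * gen2 c N f η * wt2 c φ₁ φ₂ N η) := by
  classical
  have H : AuxHyp c a₁ a₂ k₀ := ⟨hc0, hcpos, hLG, hk₀, ha₂, hM⟩
  haveI : Fact (1 < N) := ⟨hN⟩
  have hone : (1 : ZMod N) ≠ 0 := one_ne_zero
  have hp : ∀ x : ZMod N, x ≠ x + 1 := by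
    intro x h
    apply hone
    have := congrArg (fun z => z - x) h
    simpa using this.symm
  have hm : ∀ x : ZMod N, x ≠ x - 1 := by
    intro x h
    apply hone
    have h2 : x - (x - 1) = 0 := by rw [← h]; simp
    rwa [sub_sub_cancel] at h2
  -- expansion of the generator integrand
  have hexp : ∀ (u v : (ZMod N → ℕ × ℕ) → ℝ) (η : ZMod N → ℕ × ℕ),
      u η * gen2 c N v η * wt2 c φ₁ φ₂ N η = (1/2) * ∑ x : ZMod N,
        (pc1 c φ₁ φ₂ N u v x (x+1) η + pc1 c φ₁ φ₂ N u v x (x-1) η +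
         pc2 c φ₁ φ₂ N u v x (x+1) η + pc2 c φ₁ φ₂ N u v x (x-1) η -
         2 * qc c φ₁ φ₂ N u v x η) := by
    intro u v η
    rw [gen2]
    rw [show u η * ((1/2 : ℝ) * ∑ x : ZMod N,
        (crate1 c (η x).1 (η x).2 * (v (move1 η x (x + 1)) - v η) +
         crate1 c (η x).1 (η x).2 * (v (move1 η x (x - 1)) - v η) +
         crate2 c (η x).1 (η x).2 * (v (move2 η x (x + 1)) - v η) +
         crate2 c (η x).1 (η x).2 * (v (move2 η x (x - 1)) - v η))) * wt2 c φ₁ φ₂ N η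
      = (1/2) * ∑ x : ZMod N,
        ((crate1 c (η x).1 (η x).2 * (v (move1 η x (x + 1)) - v η) +
         crate1 c (η x).1 (η x).2 * (v (move1 η x (x - 1)) - v η) +
         crate2 c (η x).1 (η x).2 * (v (move2 η x (x + 1)) - v η) +
         crate2 c (η x).1 (η x).2 * (v (move2 η x (x - 1)) - v η)) * (u η * wt2 c φ₁ φ₂ N η))
      from by rw [← Finset.sum_mul]; ring]
    congr 1
    apply Finset.sum_congr rfl
    intro x _
    rw [pc1, pc1, pc2, pc2, qc]
    ring
  -- summability of each piece combination
  have hEsum : ∀ (u v : (ZMod N → ℕ × ℕ) → ℝ) (Mu Mv : ℝ),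
      (∀ η, |u η| ≤ Mu) → (∀ η, |v η| ≤ Mv) → ∀ x : ZMod N,
      Summable (fun η => pc1 c φ₁ φ₂ N u v x (x+1) η + pc1 c φ₁ φ₂ N u v x (x-1) η +
         pc2 c φ₁ φ₂ N u v x (x+1) η + pc2 c φ₁ φ₂ N u v x (x-1) η -
         2 * qc c φ₁ φ₂ N u v x η) := by
    intro u v Mu Mv hu hv x
    have q := (aux_summable_qc H h₁ h₂ u v Mu Mv hu hv x).mul_left 2
    exact ((((aux_summable_pc1 H h₁ h₂ u v Mu Mv hu hv x (x+1)).add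
      (aux_summable_pc1 H h₁ h₂ u v Mu Mv hu hv x (x-1))).add
      (aux_summable_pc2 H h₁ h₂ u v Mu Mv hu hv x (x+1))).add
      (aux_summable_pc2 H h₁ h₂ u v Mu Mv hu hv x (x-1))).sub q
  have hmain : ∀ (u v : (ZMod N → ℕ × ℕ) → ℝ) (Mu Mv : ℝ),
      (∀ η, |u η| ≤ Mu) → (∀ η, |v η| ≤ Mv) →
      Summable (fun η => u η * gen2 c N v η * wt2 c φ₁ φ₂ N η) := by
    intro u v Mu Mv hu hv
    have : Summable (fun η => (1/2 : ℝ) * ∑ x : ZMod N,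
        (pc1 c φ₁ φ₂ N u v x (x+1) η + pc1 c φ₁ φ₂ N u v x (x-1) η +
         pc2 c φ₁ φ₂ N u v x (x+1) η + pc2 c φ₁ φ₂ N u v x (x-1) η -
         2 * qc c φ₁ φ₂ N u v x η)) := by
      apply Summable.mul_left
      apply summable_sum
      intro x _
      exact hEsum u v Mu Mv hu hv x
    exact this.congr (fun η => (hexp u v η).symm)
  refine ⟨hmain f g Mf Mg hf hg, hmain g f Mg Mf hg hf, ?_⟩
  -- now the equality of the two sums
  have htsum : ∀ (u v : (ZMod N → ℕ × ℕ) → ℝ) (Mu Mv : ℝ),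
      (∀ η, |u η| ≤ Mu) → (∀ η, |v η| ≤ Mv) →
      (∑' η, u η * gen2 c N v η * wt2 c φ₁ φ₂ N η) = (1/2) * ∑ x : ZMod N,
        ((∑' η, pc1 c φ₁ φ₂ N u v x (x+1) η) + (∑' η, pc1 c φ₁ φ₂ N u v x (x-1) η) +
         (∑' η, pc2 c φ₁ φ₂ N u v x (x+1) η) + (∑' η, pc2 c φ₁ φ₂ N u v x (x-1) η) -
         2 * (∑' η, qc c φ₁ φ₂ N u v x η)) := by
    intro u v Mu Mv hu hv
    rw [tsum_congr (hexp u v), tsum_mul_left]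
    congr 1
    rw [Summable.tsum_finsetSum (fun x _ => hEsum u v Mu Mv hu hv x)]
    apply Finset.sum_congr rfl
    intro x _
    have s1 := aux_summable_pc1 H h₁ h₂ u v Mu Mv hu hv x (x+1)
    have s2 := aux_summable_pc1 H h₁ h₂ u v Mu Mv hu hv x (x-1)
    have s3 := aux_summable_pc2 H h₁ h₂ u v Mu Mv hu hv x (x+1)
    have s4 := aux_summable_pc2 H h₁ h₂ u v Mu Mv hu hv x (x-1)
    have sq := (aux_summable_qc H h₁ h₂ u v Mu Mv hu hv x).mul_left 2
    rw [Summable.tsum_sub (((s1.add s2).add s3).add s4) sq,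
      Summable.tsum_add ((s1.add s2).add s3) s4, Summable.tsum_add (s1.add s2) s3, Summable.tsum_add s1 s2,
      tsum_mul_left]
  rw [htsum f g Mf Mg hf hg, htsum g f Mg Mf hg hf]
  congr 1
  -- swaps
  have hswap1p : ∀ x : ZMod N, (∑' η, pc1 c φ₁ φ₂ N f g x (x+1) η)
      = (∑' η, pc1 c φ₁ φ₂ N g f (x+1) ((x+1)-1) η) := by
    intro x
    rw [aux_swap1 H h₁ h₂ f g x (x+1) (hp x)]
    rw [add_sub_cancel_right]
  have hswap1m : ∀ x : ZMod N, (∑' η, pc1 c φ₁ φ₂ N f g x (x-1) η)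
      = (∑' η, pc1 c φ₁ φ₂ N g f (x-1) ((x-1)+1) η) := by
    intro x
    rw [aux_swap1 H h₁ h₂ f g x (x-1) (hm x)]
    rw [sub_add_cancel]
  have hswap2p : ∀ x : ZMod N, (∑' η, pc2 c φ₁ φ₂ N f g x (x+1) η)
      = (∑' η, pc2 c φ₁ φ₂ N g f (x+1) ((x+1)-1) η) := by
    intro x
    rw [aux_swap2 H h₁ h₂ f g x (x+1) (hp x)]
    rw [add_sub_cancel_right]
  have hswap2m : ∀ x : ZMod N, (∑' η, pc2 c φ₁ φ₂ N f g x (x-1) η)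
      = (∑' η, pc2 c φ₁ φ₂ N g f (x-1) ((x-1)+1) η) := by
    intro x
    rw [aux_swap2 H h₁ h₂ f g x (x-1) (hm x)]
    rw [sub_add_cancel]
  have hq : ∀ x : ZMod N, (∑' η, qc c φ₁ φ₂ N f g x η) = (∑' η, qc c φ₁ φ₂ N g f x η) := by
    intro x
    apply tsum_congr
    intro η
    rw [qc, qc]
    ring
  -- split the sums
  rw [Finset.sum_congr rfl (fun x _ => by
    rw [hswap1p x, hswap1m x, hswap2p x, hswap2m x, hq x])]
  -- now both sides are sums over x; regroup using translation invariance
  have htrans : ∀ F : ZMod N → ℝ, ∑ x : ZMod N, F (x + 1) = ∑ x : ZMod N, F x := by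
    intro F
    exact Equiv.sum_comp (Equiv.addRight (1 : ZMod N)) F
  have htrans' : ∀ F : ZMod N → ℝ, ∑ x : ZMod N, F (x - 1) = ∑ x : ZMod N, F x := by
    intro F
    exact Equiv.sum_comp (Equiv.subRight (1 : ZMod N)) F
  simp only [Finset.sum_add_distrib, Finset.sum_sub_distrib]
  rw [htrans (fun z => ∑' η, pc1 c φ₁ φ₂ N g f z (z-1) η),
    htrans' (fun z => ∑' η, pc1 c φ₁ φ₂ N g f z (z+1) η),
    htrans (fun z => ∑' η, pc2 c φ₁ φ₂ N g f z (z-1) η),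
    htrans' (fun z => ∑' η, pc2 c φ₁ φ₂ N g f z (z+1) η)]
  ring
end
end
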